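/- Let q = e^{2πi/3}, H₊ the 9-dimensional Hopf algebra generated by ã, b̃ (ãb̃ = qb̃ã, ã³ = 1, b̃³ = 0), and P₊ the quantum Borel algebra generated by a, a⁻¹, b with ba = q⁻¹ab. There exists no injective ℂ-algebra homomorphism H₊ → P₊. -/

import Mathlib

noncomputable section

/-- `q = e^{2πi/3}`, a primitive cube root of unity. -/
def qc : ℂ := Complex.exp (2 * Real.pi * Complex.I / 3)

/-- `H₊`: generators `ã, b̃` with `ãb̃ = q b̃ã`, `ã³ = 1`, `b̃³ = 0`. -/
inductive HplusRel : FreeAlgebra ℂ (Fin 2) → FreeAlgebra ℂ (Fin 2) → Prop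
  | ab : HplusRel (FreeAlgebra.ι ℂ 0 * FreeAlgebra.ι ℂ 1)
      (qc • (FreeAlgebra.ι ℂ 1 * FreeAlgebra.ι ℂ 0))
  | a3 : HplusRel (FreeAlgebra.ι ℂ 0 ^ 3) 1
  | b3 : HplusRel (FreeAlgebra.ι ℂ 1 ^ 3) 0

abbrev Hplus : Type := RingQuot HplusRel

/-- The quantum Borel algebra `P₊ = ℂ⟨a, a⁻¹, b⟩/⟨ba − q⁻¹ab⟩` (with `δ = a⁻¹`). -/
inductive BorelRel : FreeAlgebra ℂ (Fin 3) → FreeAlgebra ℂ (Fin 3) → Prop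
  | ad : BorelRel (FreeAlgebra.ι ℂ 0 * FreeAlgebra.ι ℂ 2) 1
  | da : BorelRel (FreeAlgebra.ι ℂ 2 * FreeAlgebra.ι ℂ 0) 1
  | ba : BorelRel (FreeAlgebra.ι ℂ 1 * FreeAlgebra.ι ℂ 0)
      (qc⁻¹ • (FreeAlgebra.ι ℂ 0 * FreeAlgebra.ι ℂ 1))
  | bd : BorelRel (FreeAlgebra.ι ℂ 1 * FreeAlgebra.ι ℂ 2)
      (qc • (FreeAlgebra.ι ℂ 2 * FreeAlgebra.ι ℂ 1))

abbrev Pplus : Type := RingQuot BorelRel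

/-! The generator `b̃` of `H₊` is nilpotent (`b̃³ = 0`) but nonzero, as the representation
`ã ↦ diag(1, q)`, `b̃ ↦ E₂₁` shows, so it suffices that `P₊` has no zero divisors.
The monomials `aᵐbⁿ` (`m : ℤ`, `n : ℕ`) form a basis of `P₊`: they span because the product of
two monomials is a nonzero multiple of a monomial, and they are independent because they move
`δ₀` to distinct basis vectors in a representation on `ℂ[ℤ × ℕ]`. Since `ℤ × ℕ` has unique
sums, the extreme coefficient of a product `xy` is a nonzero multiple of a coefficient of `x`
times one of `y`. -/

section

variable {R A : Type*} [CommSemiring R] [Semiring A] [Algebra R A]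

theorem pow_mul_eq_smul_mul_pow {x y : A} {c : R} (h : x * y = c • (y * x)) (n : ℕ) :
    x ^ n * y = c ^ n • (y * x ^ n) := by
  induction n with
  | zero => simp
  | succ n ih =>
    rw [pow_succ, mul_assoc, h, mul_smul_comm, ← mul_assoc, ih, smul_mul_assoc, smul_smul,
      mul_assoc, ← pow_succ, ← pow_succ']

theorem Module.Basis.repr_mul_add_of_uniqueAdd {G : Type*} [Add G] (e : Module.Basis G R A)
    (c : G → G → R) (he : ∀ g h, e g * e h = c g h • e (g + h)) {x y : A} {g₀ h₀ : G}
    (hu : UniqueAdd (e.repr x).support (e.repr y).support g₀ h₀) :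
    e.repr (x * y) (g₀ + h₀) = e.repr x g₀ * e.repr y h₀ * c g₀ h₀ := by
  classical
  conv_lhs => rw [← e.linearCombination_repr x, ← e.linearCombination_repr y]
  simp_rw [Finsupp.linearCombination_apply, Finsupp.sum, Finset.sum_mul_sum, smul_mul_smul_comm,
    he, smul_smul, map_sum, map_smul, e.repr_self, Finsupp.finsetSum_apply, Finsupp.smul_apply,
    Finsupp.single_apply, ← Finset.sum_product']
  rw [Finset.sum_eq_single (g₀, h₀)]
  · simp
  · rintro ⟨g, h⟩ hgh hne
    rw [Finset.mem_product] at hgh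
    rw [if_neg fun hsum ↦ hne (Prod.ext_iff.mpr (hu hgh.1 hgh.2 hsum)), smul_zero]
  · intro hnot
    rcases not_and_or.mp (Finset.mem_product.not.mp hnot) with hg | hh
    · simp [Finsupp.notMem_support_iff.mp hg]
    · simp [Finsupp.notMem_support_iff.mp hh]

theorem Module.Basis.noZeroDivisors_of_mul_eq_smul {G : Type*} [Add G] [UniqueSums G]
    [NoZeroDivisors R] (e : Module.Basis G R A) (c : G → G → R) (hc : ∀ g h, c g h ≠ 0)
    (he : ∀ g h, e g * e h = c g h • e (g + h)) : NoZeroDivisors A where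
  eq_zero_or_eq_zero_of_mul_eq_zero {x y} hxy := by
    contrapose! hxy
    obtain ⟨g₀, hg₀, h₀, hh₀, hu⟩ := UniqueSums.uniqueAdd_of_nonempty
      (Finsupp.support_nonempty_iff.mpr (e.repr.map_ne_zero_iff.mpr hxy.1))
      (Finsupp.support_nonempty_iff.mpr (e.repr.map_ne_zero_iff.mpr hxy.2))
    have hcoeff := e.repr_mul_add_of_uniqueAdd c he hu
    have hne : e.repr x g₀ * e.repr y h₀ * c g₀ h₀ ≠ 0 :=
      mul_ne_zero (mul_ne_zero (Finsupp.mem_support_iff.mp hg₀) (Finsupp.mem_support_iff.mp hh₀))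
        (hc g₀ h₀)
    intro hxy
    rw [hxy, map_zero, Finsupp.zero_apply] at hcoeff
    exact hne hcoeff.symm

theorem RingQuot.adjoin_range_mkAlgHom_ι {X : Type*}
    (r : FreeAlgebra R X → FreeAlgebra R X → Prop) :
    Algebra.adjoin R (Set.range fun i ↦ RingQuot.mkAlgHom R r (FreeAlgebra.ι R i)) = ⊤ := by
  rw [Set.range_comp', Algebra.adjoin_image, FreeAlgebra.adjoin_range_ι, Algebra.map_top,
    AlgHom.range_eq_top]
  exact RingQuot.mkAlgHom_surjective R r

end

theorem mul_units_zpow_eq_smul_mul {K A : Type*} [Field K] [Ring A] [Algebra K A] {x : A}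
    {u : Aˣ} {c : K} (hc : c ≠ 0) (h : x * u = c • (u * x)) (m : ℤ) :
    x * ↑(u ^ m) = c ^ m • (↑(u ^ m) * x) := by
  have h' : ↑u * x = c⁻¹ • (x * ↑u) := by rw [h, inv_smul_smul₀ hc]
  have h_inv : x * ↑u⁻¹ = c⁻¹ • (↑u⁻¹ * x) :=
    calc x * ↑u⁻¹ = ↑u⁻¹ * (↑u * x) * ↑u⁻¹ := by simp [← mul_assoc]
      _ = c⁻¹ • (↑u⁻¹ * x) := by rw [h', mul_smul_comm, smul_mul_assoc]; simp [mul_assoc]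
  induction m using Int.induction_on with
  | zero => simp
  | succ n ih =>
    rw [zpow_add_one, Units.val_mul, ← mul_assoc, ih, smul_mul_assoc, mul_assoc, h,
      mul_smul_comm, smul_smul, ← mul_assoc, zpow_add_one₀ hc]
  | pred n ih =>
    rw [zpow_sub_one, Units.val_mul, ← mul_assoc, ih, smul_mul_assoc, mul_assoc, h_inv,
      mul_smul_comm, smul_smul, ← mul_assoc, zpow_sub_one₀ hc]

theorem qc_ne_zero : qc ≠ 0 := Complex.exp_ne_zero _

theorem qc_pow_three : qc ^ 3 = 1 := by
  simpa [qc] using (Complex.isPrimitiveRoot_exp 3 (by norm_num)).pow_eq_one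

namespace Hplus

def b : Hplus := RingQuot.mkAlgHom ℂ HplusRel (FreeAlgebra.ι ℂ 1)

theorem b_pow_three : b ^ 3 = 0 := by
  simpa [b] using RingQuot.mkAlgHom_rel ℂ HplusRel.b3

def toMatrix : Hplus →ₐ[ℂ] Matrix (Fin 2) (Fin 2) ℂ :=
  RingQuot.liftAlgHom ℂ ⟨FreeAlgebra.lift ℂ ![!![1, 0; 0, qc], !![0, 0; 1, 0]], by
    rintro _ _ ⟨⟩ <;>
      simp only [map_mul, map_pow, map_smul, map_one, map_zero, FreeAlgebra.lift_ι_apply]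
    all_goals
      ext i j
      fin_cases i <;> fin_cases j <;> simp [pow_succ] <;> linear_combination qc_pow_three⟩

theorem b_ne_zero : b ≠ 0 := by
  intro h
  have h₁₀ := congrArg (fun x ↦ toMatrix x 1 0) h
  simp [toMatrix, b, RingQuot.liftAlgHom_mkAlgHom_apply] at h₁₀

end Hplus

namespace Pplus

def gen (i : Fin 3) : Pplus := RingQuot.mkAlgHom ℂ BorelRel (FreeAlgebra.ι ℂ i)

def a : Pplusˣ where
  val := gen 0
  inv := gen 2
  val_inv := by simpa [gen] using RingQuot.mkAlgHom_rel ℂ BorelRel.ad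
  inv_val := by simpa [gen] using RingQuot.mkAlgHom_rel ℂ BorelRel.da

def b : Pplus := gen 1

theorem b_mul_a : b * a = qc⁻¹ • (↑a * b) := by
  simpa [a, b, gen] using RingQuot.mkAlgHom_rel ℂ BorelRel.ba

def monomial (p : ℤ × ℕ) : Pplus := ↑(a ^ p.1) * b ^ p.2

theorem monomial_mul_monomial (p p' : ℤ × ℕ) :
    monomial p * monomial p' = (qc⁻¹ ^ p'.1) ^ p.2 • monomial (p + p') := by
  obtain ⟨m, n⟩ := p
  obtain ⟨k, l⟩ := p'
  have hcomm : b ^ n * ↑(a ^ k) = (qc⁻¹ ^ k) ^ n • (↑(a ^ k) * b ^ n) :=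
    pow_mul_eq_smul_mul_pow (mul_units_zpow_eq_smul_mul (inv_ne_zero qc_ne_zero) b_mul_a k) n
  simp only [monomial, Prod.mk_add_mk, zpow_add, Units.val_mul, pow_add]
  rw [mul_assoc, ← mul_assoc (b ^ n), hcomm, smul_mul_assoc, mul_smul_comm]
  simp only [mul_assoc]

theorem span_range_monomial_mul_le :
    Submodule.span ℂ (Set.range monomial) * Submodule.span ℂ (Set.range monomial) ≤
      Submodule.span ℂ (Set.range monomial) := by
  rw [Submodule.span_mul_span, Submodule.span_le]
  rintro _ ⟨_, ⟨p, rfl⟩, _, ⟨p', rfl⟩, rfl⟩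
  dsimp only
  rw [monomial_mul_monomial]
  exact Submodule.smul_mem _ _ (Submodule.subset_span ⟨_, rfl⟩)

theorem span_range_monomial : Submodule.span ℂ (Set.range monomial) = ⊤ := by
  let S : Subalgebra ℂ Pplus := (Submodule.span ℂ (Set.range monomial)).toSubalgebra
    (Submodule.subset_span ⟨0, by simp [monomial]⟩)
    fun _ _ hx hy ↦ span_range_monomial_mul_le (Submodule.mul_mem_mul hx hy)
  have hS : S = ⊤ := by
    rw [eq_top_iff, ← RingQuot.adjoin_range_mkAlgHom_ι, Algebra.adjoin_le_iff]
    rintro _ ⟨i, rfl⟩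
    fin_cases i
    · exact Submodule.subset_span ⟨(1, 0), by simp [monomial, a, gen]⟩
    · exact Submodule.subset_span ⟨(0, 1), by simp [monomial, b, gen]⟩
    · exact Submodule.subset_span ⟨(-1, 0), by simp [monomial, a, gen]⟩
  simpa [S] using congrArg Subalgebra.toSubmodule hS

def shift (m : ℤ) : Module.End ℂ ((ℤ × ℕ) →₀ ℂ) :=
  Finsupp.lmapDomain ℂ ℂ fun p ↦ (p.1 + m, p.2)

@[simp] theorem shift_single (m : ℤ) (p : ℤ × ℕ) (c : ℂ) :
    shift m (Finsupp.single p c) = Finsupp.single (p.1 + m, p.2) c := by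
  simp [shift]

theorem shift_add (m n : ℤ) : shift (m + n) = shift m * shift n := by
  ext p : 2
  simp [add_assoc, add_comm n]

theorem shift_zero : shift 0 = 1 := by
  ext p : 2
  simp

def twistedRaise : Module.End ℂ ((ℤ × ℕ) →₀ ℂ) :=
  Finsupp.lsum ℂ fun p ↦ qc⁻¹ ^ p.1 • Finsupp.lsingle (p.1, p.2 + 1)

@[simp] theorem twistedRaise_single (p : ℤ × ℕ) (c : ℂ) :
    twistedRaise (Finsupp.single p c) = Finsupp.single (p.1, p.2 + 1) (qc⁻¹ ^ p.1 * c) := by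
  simp [twistedRaise, Finsupp.smul_single]

theorem twistedRaise_mul_shift (m : ℤ) :
    twistedRaise * shift m = qc⁻¹ ^ m • (shift m * twistedRaise) := by
  ext p : 2
  simp [zpow_add₀ (inv_ne_zero qc_ne_zero), mul_comm]

def rep : Pplus →ₐ[ℂ] Module.End ℂ ((ℤ × ℕ) →₀ ℂ) :=
  RingQuot.liftAlgHom ℂ ⟨FreeAlgebra.lift ℂ ![shift 1, twistedRaise, shift (-1)], by
    rintro _ _ ⟨⟩ <;> simp only [map_mul, map_smul, map_one, FreeAlgebra.lift_ι_apply]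
    · simp [← shift_add, shift_zero]
    · simp [← shift_add, shift_zero]
    · simpa using twistedRaise_mul_shift 1
    · simpa using twistedRaise_mul_shift (-1)⟩

theorem rep_gen (i : Fin 3) : rep (gen i) = ![shift 1, twistedRaise, shift (-1)] i := by
  simp [rep, gen, RingQuot.liftAlgHom_mkAlgHom_apply]

theorem rep_b : rep b = twistedRaise := rep_gen 1

theorem rep_zpow_a (m : ℤ) : rep ↑(a ^ m) = shift m := by
  induction m using Int.induction_on with
  | zero => simp [shift_zero]
  | succ n ih =>
    rw [zpow_add_one, Units.val_mul, map_mul, ih, shift_add]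
    exact congrArg _ (rep_gen 0)
  | pred n ih =>
    rw [zpow_sub_one, Units.val_mul, map_mul, ih, sub_eq_add_neg, shift_add]
    exact congrArg _ (rep_gen 2)

theorem rep_b_pow_single_zero (n l : ℕ) (c : ℂ) :
    (rep b ^ n) (Finsupp.single (0, l) c) = Finsupp.single (0, l + n) c := by
  induction n generalizing l with
  | zero => simp
  | succ n ih =>
    rw [pow_succ, Module.End.mul_apply, rep_b, twistedRaise_single, ← rep_b]
    simpa [add_assoc, add_comm 1] using ih (l + 1)

def orbitMap : Pplus →ₗ[ℂ] (ℤ × ℕ) →₀ ℂ :=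
  LinearMap.applyₗ (Finsupp.single (0, 0) 1) ∘ₗ rep.toLinearMap

theorem orbitMap_monomial (p : ℤ × ℕ) : orbitMap (monomial p) = Finsupp.single p 1 := by
  simp [orbitMap, monomial, rep_zpow_a, rep_b_pow_single_zero]

theorem linearIndependent_monomial : LinearIndependent ℂ monomial := by
  refine LinearIndependent.of_comp orbitMap ?_
  convert (Finsupp.basisSingleOne : Module.Basis (ℤ × ℕ) ℂ _).linearIndependent
  ext1 p
  simp [orbitMap_monomial]

def monomialBasis : Module.Basis (ℤ × ℕ) ℂ Pplus :=
  .mk linearIndependent_monomial span_range_monomial.ge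

instance : NoZeroDivisors Pplus :=
  monomialBasis.noZeroDivisors_of_mul_eq_smul (fun p p' ↦ (qc⁻¹ ^ p'.1) ^ p.2)
    (fun _ _ ↦ pow_ne_zero _ (zpow_ne_zero _ (inv_ne_zero qc_ne_zero)))
    (by simpa [monomialBasis] using monomial_mul_monomial)

end Pplus

/-- There is no injective `ℂ`-algebra homomorphism `H₊ → P₊`. -/
theorem no_injective_algHom_Hplus_Pplus :
    ¬ ∃ f : Hplus →ₐ[ℂ] Pplus, Function.Injective f := by
  rintro ⟨f, hf⟩
  have := isReduced_of_injective f hf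
  exact Hplus.b_ne_zero (IsReduced.eq_zero _ ⟨3, Hplus.b_pow_three⟩)

end
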